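/- There exist a morphism Θ = {θ_n}_{n∈ℕ} between direct systems of Banach spaces with every θ_n injective, such that the induced map on direct limits lim→ θ_* is not injective. Concretely: in ℓ², let a_1 = (1/k)_k and a_n = e_n for n ≥ 2, let M_n = span{a_1,…,a_n} with inclusion transition maps, let N_n = ℓ² with identity transition maps, and let θ_n be the restriction to M_n of the shift-annihilating map T(λ_1,λ_2,…) = (0,λ_2,λ_3,…). Then each θ_n is injective, lim→ M_* = lim→ N_* = ℓ², and lim→ θ_* = T is not injective. -/

import Mathlib

open MeasureTheory Filter

noncomputable section

variable {X : Type*} [MeasurableSpace X]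

/-- `L⁰(μ)`: real-valued functions up to `μ`-a.e. equality, as a commutative ring. -/
instance L0.instCommRing {μ : Measure X} : CommRing (X →ₘ[μ] ℝ) where
  __ : AddCommGroup (X →ₘ[μ] ℝ) := inferInstance
  __ : CommMonoid (X →ₘ[μ] ℝ) := inferInstance
  left_distrib a b c := AEEqFun.toGerm_injective <| by
    simp only [AEEqFun.mul_toGerm, AEEqFun.add_toGerm]; ring
  right_distrib a b c := AEEqFun.toGerm_injective <| by
    simp only [AEEqFun.mul_toGerm, AEEqFun.add_toGerm]; ring
  zero_mul a := AEEqFun.toGerm_injective <| by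
    simp only [AEEqFun.mul_toGerm, AEEqFun.zero_toGerm]; ring
  mul_zero a := AEEqFun.toGerm_injective <| by
    simp only [AEEqFun.mul_toGerm, AEEqFun.zero_toGerm]; ring

/-- A pointwise seminorm on an `L⁰(μ)`-module, with values in `L⁰(μ)`
(ordered by the `μ`-a.e. order). -/
structure PtwiseSeminorm (μ : Measure X) (M : Type*) [AddCommGroup M]
    [Module (X →ₘ[μ] ℝ) M] where
  pn : M → X →ₘ[μ] ℝ
  nonneg : ∀ v, 0 ≤ pn v
  add_le : ∀ v w, pn (v + w) ≤ pn v + pn w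
  smul_eq : ∀ (f : X →ₘ[μ] ℝ) (v : M), pn (f • v) = |f| * pn v

/-- A pointwise seminorm is a pointwise norm if `|v| = 0` a.e. implies `v = 0`. -/
def PtwiseSeminorm.IsNorm {μ : Measure X} {M : Type*} [AddCommGroup M]
    [Module (X →ₘ[μ] ℝ) M] (N : PtwiseSeminorm μ M) : Prop :=
  ∀ v, N.pn v = 0 → v = 0

/-- The distance `d(v,w) = ∫ min(|v-w|,1) dm'` associated with a pointwise
(semi)norm `pnorm` (with subtraction `sub`). -/
def pd {μ : Measure X} (m' : Measure X) {M : Type*}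
    (pnorm : M → X →ₘ[μ] ℝ) (sub : M → M → M) (v w : M) : ℝ :=
  ∫ x, min ((pnorm (sub v w)) x) 1 ∂m'

/-- Sequential continuity with respect to two distance functions. -/
def SeqCont {A B : Type*} (dA : A → A → ℝ) (dB : B → B → ℝ) (f : A → B) : Prop :=
  ∀ (u : ℕ → A) (a : A), Tendsto (fun n => dA (u n) a) atTop (nhds 0) →
    Tendsto (fun n => dB (f (u n)) (f a)) atTop (nhds 0)

/-- Completeness with respect to a distance function. -/
def CompleteWith {A : Type*} (d : A → A → ℝ) : Prop :=
  ∀ u : ℕ → A, (∀ ε > 0, ∃ k, ∀ n ≥ k, ∀ p ≥ k, d (u n) (u p) < ε) →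
    ∃ a, Tendsto (fun n => d (u n) a) atTop (nhds 0)

/-- A normed `L⁰(μ)`-module: an `L⁰(μ)`-module with a pointwise norm that is
complete for the induced distance (via the auxiliary probability measure `m'`). -/
structure NormedL0Module (μ m' : Measure X) where
  carrier : Type*
  ag : AddCommGroup carrier
  mo : Module (X →ₘ[μ] ℝ) carrier
  pn : carrier → X →ₘ[μ] ℝ
  pn_nonneg : ∀ v, 0 ≤ pn v
  pn_add_le : ∀ v w, pn (v + w) ≤ pn v + pn w
  pn_smul : ∀ (f : X →ₘ[μ] ℝ) v, pn (f • v) = |f| * pn v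
  pn_eq_zero : ∀ v, pn v = 0 → v = 0
  complete : CompleteWith (pd m' pn (fun a b => a - b))

attribute [instance] NormedL0Module.ag NormedL0Module.mo

variable {μ m' : Measure X}

/-- A morphism of normed `L⁰(μ)`-modules: `L⁰`-linear with `|φ(v)| ≤ |v|` a.e. -/
structure NMHom (M N : NormedL0Module μ m') where
  toFun : M.carrier → N.carrier
  map_add' : ∀ v w, toFun (v + w) = toFun v + toFun w
  map_smul' : ∀ (f : X →ₘ[μ] ℝ) v, toFun (f • v) = f • toFun v
  bound' : ∀ v, N.pn (toFun v) ≤ M.pn v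

/-- The identity morphism. -/
def NMHom.id (M : NormedL0Module μ m') : NMHom M M :=
  ⟨fun v => v, fun _ _ => rfl, fun _ _ => rfl, fun _ => le_rfl⟩

universe w

/-- A direct system of normed `L⁰(μ)`-modules over a preordered index set. -/
structure DirSystem (μ m' : Measure X) (I : Type*) [Preorder I] where
  obj : I → NormedL0Module.{_, w} μ m'
  map : ∀ i j, i ≤ j → NMHom (obj i) (obj j)
  map_self : ∀ i v, (map i i le_rfl).toFun v = v
  map_comp : ∀ i j k (hij : i ≤ j) (hjk : j ≤ k) v,
    (map j k hjk).toFun ((map i j hij).toFun v) = (map i k (hij.trans hjk)).toFun v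

/-- An inverse system of normed `L⁰(μ)`-modules over a preordered index set. -/
structure InvSystem (μ m' : Measure X) (I : Type*) [Preorder I] where
  obj : I → NormedL0Module.{_, w} μ m'
  map : ∀ i j, i ≤ j → NMHom (obj j) (obj i)
  map_self : ∀ i v, (map i i le_rfl).toFun v = v
  map_comp : ∀ i j k (hij : i ≤ j) (hjk : j ≤ k) v,
    (map i j hij).toFun ((map j k hjk).toFun v) = (map i k (hij.trans hjk)).toFun v

/-- `(L, ι)` is a direct limit of the system `(obj, map)`: it is a target and
every target factors uniquely through it. -/
structure IsDirectLimit {I : Type*} [Preorder I] (obj : I → NormedL0Module μ m')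
    (map : ∀ i j, i ≤ j → (obj i).carrier → (obj j).carrier)
    (L : NormedL0Module μ m') (can : ∀ i, NMHom (obj i) L) : Prop where
  compat : ∀ i j (h : i ≤ j) v, (can j).toFun (map i j h v) = (can i).toFun v
  universal : ∀ (T : NormedL0Module.{_, w} μ m') (psi : ∀ i, NMHom (obj i) T),
    (∀ i j (h : i ≤ j) v, (psi j).toFun (map i j h v) = (psi i).toFun v) →
    ∃! F : NMHom L T, ∀ i v, F.toFun ((can i).toFun v) = (psi i).toFun v

/-- `(L, pr)` is an inverse limit of the system `(obj, map)`: it is a cone and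
every cone factors uniquely through it. -/
structure IsInverseLimit {I : Type*} [Preorder I] (obj : I → NormedL0Module μ m')
    (map : ∀ i j, i ≤ j → (obj j).carrier → (obj i).carrier)
    (L : NormedL0Module μ m') (pr : ∀ i, NMHom L (obj i)) : Prop where
  compat : ∀ i j (h : i ≤ j) v, map i j h ((pr j).toFun v) = (pr i).toFun v
  universal : ∀ (T : NormedL0Module.{_, w} μ m') (Q : ∀ i, NMHom T (obj i)),
    (∀ i j (h : i ≤ j) w, map i j h ((Q j).toFun w) = (Q i).toFun w) →
    ∃! F : NMHom T L, ∀ i w, (pr i).toFun (F.toFun w) = (Q i).toFun w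

/-- A continuous `L⁰(μ)`-linear map between normed `L⁰(μ)`-modules
(an element of `Hom(M,N)`). -/
structure CLM (M N : NormedL0Module μ m') where
  toFun : M.carrier → N.carrier
  map_add' : ∀ v w, toFun (v + w) = toFun v + toFun w
  map_smul' : ∀ (f : X →ₘ[μ] ℝ) v, toFun (f • v) = f • toFun v
  cont' : SeqCont (pd m' M.pn (fun a b => a - b)) (pd m' N.pn (fun a b => a - b)) toFun

/-- An element of the dual module `M* = Hom(M, L⁰(μ))`. -/
structure DualElem (M : NormedL0Module μ m') where
  toFun : M.carrier → X →ₘ[μ] ℝ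
  map_add' : ∀ v w, toFun (v + w) = toFun v + toFun w
  map_smul' : ∀ (f : X →ₘ[μ] ℝ) v, toFun (f • v) = f * toFun v
  cont' : SeqCont (pd m' M.pn (fun a b => a - b))
    (pd m' (fun g : X →ₘ[μ] ℝ => |g|) (fun a b => a - b)) toFun

/-! The map killing the 0-th coordinate is injective on each `M_n` because there the 0-th
coordinate is determined by the `(n+1)`-st: `f ↦ f 0 - (n + 2) f (n + 1)` vanishes on
`a 0, …, a n`. But the closure of `⋃ M_n` contains every `e_i` with `i ≥ 1`, hence `a 0` minus its
0-th component, hence `e_0`, which the map kills. -/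

open scoped ENNReal

namespace lp

variable {α 𝕜 : Type*} {E : α → Type*} [∀ i, NormedAddCommGroup (E i)] {p : ℝ≥0∞}
  [NontriviallyNormedField 𝕜] [∀ i, NormedSpace 𝕜 (E i)] [DecidableEq α] [Fact (1 ≤ p)]

lemma mem_of_forall_single_mem {K : Submodule 𝕜 (lp E p)} (hK : IsClosed (K : Set (lp E p)))
    (hp : p ≠ ∞) (f : lp E p) (h : ∀ i, lp.single p i (f i) ∈ K) : f ∈ K :=
  (lp.hasSum_single hp f).tsum_eq ▸ tsum_mem hK h

lemma dense_of_forall_single_mem_topologicalClosure (hp : p ≠ ∞) {S : Submodule 𝕜 (lp E p)}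
    (h : ∀ i (x : E i), lp.single p i x ∈ S.topologicalClosure) : Dense (S : Set (lp E p)) :=
  Submodule.dense_iff_topologicalClosure_eq_top.mpr <| eq_top_iff.mpr fun f _ =>
    mem_of_forall_single_mem S.isClosed_topologicalClosure hp f fun i => h i (f i)

variable (𝕜 E p) in
def eraseCoord (i : α) : lp E p →L[𝕜] lp E p :=
  ContinuousLinearMap.id 𝕜 _ - (singleContinuousLinearMap 𝕜 E p i).comp (evalCLM 𝕜 E p i)

lemma eraseCoord_apply (i : α) (f : lp E p) (j : α) :
    eraseCoord 𝕜 E p i f j = if j = i then 0 else f j := by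
  rcases eq_or_ne j i with rfl | h
  · simp [eraseCoord, evalCLM]
  · simp [eraseCoord, h]

lemma sub_eraseCoord (i : α) (f : lp E p) : f - eraseCoord 𝕜 E p i f = lp.single p i (f i) := by
  simp [eraseCoord, evalCLM]

lemma norm_eraseCoord_apply_le (i : α) (f : lp E p) : ‖eraseCoord 𝕜 E p i f‖ ≤ ‖f‖ :=
  norm_mono (zero_lt_one.trans_le Fact.out).ne' fun j => by
    rw [eraseCoord_apply]; split_ifs <;> simp

lemma norm_eraseCoord_le (i : α) : ‖eraseCoord 𝕜 E p i‖ ≤ 1 :=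
  ContinuousLinearMap.opNorm_le_bound _ zero_le_one fun f => by
    simpa using norm_eraseCoord_apply_le i f

lemma eraseCoord_single (i : α) (x : E i) : eraseCoord 𝕜 E p i (lp.single p i x) = 0 := by
  simpa using sub_eraseCoord (𝕜 := 𝕜) i (lp.single p i x)

lemma not_injective_eraseCoord (i : α) [Nontrivial (E i)] :
    ¬ Function.Injective (eraseCoord 𝕜 E p i) := fun h => by
  obtain ⟨x, hx⟩ := exists_ne (0 : E i)
  refine hx ((lp.isometry_single i).injective (h ?_))
  rw [eraseCoord_single, lp.single_zero, map_zero]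

end lp

lemma iUnion_span_image_Iic {R M : Type*} [Semiring R] [AddCommMonoid M] [Module R M]
    (a : ℕ → M) :
    ⋃ n : ℕ, (Submodule.span R (a '' Set.Iic n) : Set M) = Submodule.span R (Set.range a) := by
  have hmono : Monotone fun n : ℕ => Submodule.span R (a '' Set.Iic n) := fun _ _ h =>
    Submodule.span_mono (Set.image_mono (Set.Iic_subset_Iic.mpr h))
  rw [← Submodule.coe_iSup_of_directed _ hmono.directed_le, Submodule.iSup_span,
    ← Set.image_iUnion, Set.iUnion_Iic, Set.image_univ]

namespace HarmonicSpan

local notation "ℓ²" => lp (fun _ : ℕ => ℝ) 2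

def coordRelation (n : ℕ) : ℓ² →L[ℝ] ℝ :=
  lp.evalCLM ℝ _ 2 0 - ((n : ℝ) + 2) • lp.evalCLM ℝ _ 2 (n + 1)

lemma coordRelation_apply (n : ℕ) (f : ℓ²) :
    coordRelation n f = f 0 - ((n : ℝ) + 2) * f (n + 1) := rfl

lemma span_image_Iic_le_ker_coordRelation {a : ℕ → ℓ²}
    (ha0 : ∀ k : ℕ, (a 0 : ℕ → ℝ) k = 1 / (k + 1))
    (han : ∀ n : ℕ, 1 ≤ n → a n = lp.single 2 n 1) (n : ℕ) :
    Submodule.span ℝ (a '' Set.Iic n) ≤ LinearMap.ker (coordRelation n : ℓ² →ₗ[ℝ] ℝ) := by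
  rw [Submodule.span_le]
  rintro _ ⟨i, hi, rfl⟩
  rw [SetLike.mem_coe, LinearMap.mem_ker, ContinuousLinearMap.coe_coe, coordRelation_apply]
  rcases Nat.eq_zero_or_pos i with rfl | hi0
  · rw [ha0, ha0]
    push_cast
    field_simp
    ring
  · rw [han i hi0, lp.single_apply_ne _ _ _ (by omega), lp.single_apply_ne _ _ _ (by grind)]
    ring

lemma disjoint_span_image_Iic_ker_eraseCoord {a : ℕ → ℓ²}
    (ha0 : ∀ k : ℕ, (a 0 : ℕ → ℝ) k = 1 / (k + 1))
    (han : ∀ n : ℕ, 1 ≤ n → a n = lp.single 2 n 1) (n : ℕ) :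
    Disjoint (Submodule.span ℝ (a '' Set.Iic n))
      (LinearMap.ker (lp.eraseCoord ℝ (fun _ : ℕ => ℝ) 2 0).toLinearMap) := by
  rw [Submodule.disjoint_def]
  intro x hx hT
  have hcoord : ∀ k ≠ 0, x k = 0 := fun k hk => by
    simpa [lp.eraseCoord_apply, hk] using congrArg (fun g : ℓ² => g k) (LinearMap.mem_ker.mp hT)
  have hx0 : x 0 = 0 := by
    simpa [coordRelation_apply, hcoord (n + 1) n.succ_ne_zero] using
      span_image_Iic_le_ker_coordRelation ha0 han n hx
  ext k
  rcases eq_or_ne k 0 with rfl | hk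
  exacts [hx0, hcoord k hk]

lemma dense_iUnion_span_image_Iic {a : ℕ → ℓ²}
    (ha0 : ∀ k : ℕ, (a 0 : ℕ → ℝ) k = 1 / (k + 1))
    (han : ∀ n : ℕ, 1 ≤ n → a n = lp.single 2 n 1) :
    Dense (⋃ n : ℕ, (Submodule.span ℝ (a '' Set.Iic n) : Set ℓ²)) := by
  rw [iUnion_span_image_Iic]
  set S := Submodule.span ℝ (Set.range a)
  set K := S.topologicalClosure
  have ha : ∀ i, a i ∈ K := fun i =>
    S.le_topologicalClosure (Submodule.subset_span ⟨i, rfl⟩)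
  have hpos : ∀ i, 1 ≤ i → ∀ x : ℝ, lp.single 2 i x ∈ K := fun i hi x => by
    rw [← mul_one x, ← smul_eq_mul, lp.single_smul, ← han i hi]
    exact K.smul_mem x (ha i)
  have herase : lp.eraseCoord ℝ _ 2 0 (a 0) ∈ K := by
    refine lp.mem_of_forall_single_mem S.isClosed_topologicalClosure (by simp) _ fun i => ?_
    rcases Nat.eq_zero_or_pos i with rfl | hi
    · simp [lp.eraseCoord_apply]
    · exact hpos i hi _
  have he0 : lp.single 2 0 (1 : ℝ) ∈ K := by
    simpa [lp.sub_eraseCoord, ha0] using K.sub_mem (ha 0) herase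
  refine lp.dense_of_forall_single_mem_topologicalClosure (by simp) fun i x => ?_
  rcases Nat.eq_zero_or_pos i with rfl | hi
  · simpa [← lp.single_smul] using K.smul_mem x he0
  · exact hpos i hi x

end HarmonicSpan

/-- A stagewise-injective morphism of direct systems of Banach
spaces whose direct limit is not injective: in `ℓ²`, with `a 0 = (1/(k+1))_k` and
`a n = e_n` for `n ≥ 1`, `M_n = span{a 0, …, a n}` (with dense union, so
`lim→ M_* = ℓ²`), the coordinate-killing contraction `T` (killing the 0-th
coordinate) is injective on each `M_n` but not injective on `ℓ²`. -/
theorem stmt12 (a : ℕ → lp (fun _ : ℕ => ℝ) 2)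
    (ha0 : ∀ k : ℕ, (a 0 : ℕ → ℝ) k = 1 / (k + 1))
    (han : ∀ n : ℕ, 1 ≤ n → a n = lp.single 2 n 1) :
    ∃ T : lp (fun _ : ℕ => ℝ) 2 →L[ℝ] lp (fun _ : ℕ => ℝ) 2,
      (∀ f (k : ℕ), (T f : ℕ → ℝ) k = if k = 0 then 0 else (f : ℕ → ℝ) k) ∧
      ‖T‖ ≤ 1 ∧
      (∀ n : ℕ, Set.InjOn T (Submodule.span ℝ (a '' Set.Iic n) : Set (lp (fun _ : ℕ => ℝ) 2))) ∧
      ¬ Function.Injective T ∧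
      Dense (⋃ n : ℕ, (Submodule.span ℝ (a '' Set.Iic n) : Set (lp (fun _ : ℕ => ℝ) 2))) :=
  ⟨lp.eraseCoord ℝ _ 2 0, lp.eraseCoord_apply 0, lp.norm_eraseCoord_le 0,
    fun n => LinearMap.injOn_of_disjoint_ker le_rfl
      (HarmonicSpan.disjoint_span_image_Iic_ker_eraseCoord ha0 han n),
    lp.not_injective_eraseCoord 0, HarmonicSpan.dense_iUnion_span_image_Iic ha0 han⟩
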